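/- arXiv:2305.05188 — 2 statements merged into one kernel-verified Lean document; each statement's English description precedes it below -/
import Mathlib

section
/- For every integer r, (u_1⋯u_n) · e_{n−r}(M') = E_r(u) + E_{r+1}(u) in R, where M' is the multiset {u_1,…,u_n, u_1^{-1},…,u_n^{-1}, 1} (with the extra element 1 adjoined). -/
/-- The `j`-th elementary symmetric function of a finite multiset `S` of ring elements,
indexed by `j : ℤ`, with `e_0(S) = 1` and `e_j(S) = 0` for `j < 0` or `j > |S|`. -/
def msym {R : Type*} [CommRing R] (S : Multiset R) (j : ℤ) : R :=
  if 0 ≤ j then ((Multiset.powersetCard j.toNat S).map Multiset.prod).sum else 0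

/-- The multiset `{u_1, …, u_n}` of the images in `R` of the units `u_i`. -/
def uMS {R : Type*} [CommRing R] {n : ℕ} (u : Fin n → Rˣ) : Multiset R :=
  Multiset.map (fun i => (u i : R)) Finset.univ.val

/-- The multiset `{u_1^{-1}, …, u_n^{-1}}`. -/
def uMSinv {R : Type*} [CommRing R] {n : ℕ} (u : Fin n → Rˣ) : Multiset R :=
  Multiset.map (fun i => (((u i)⁻¹ : Rˣ) : R)) Finset.univ.val

/-- `E_r(u) = Σ_{i=0}^{n} e_i(u) · e_{r+i}(u)` for `r : ℤ`. -/
def uE {R : Type*} [CommRing R] {n : ℕ} (u : Fin n → Rˣ) (r : ℤ) : R :=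
  ∑ i ∈ Finset.range (n + 1), msym (uMS u) i * msym (uMS u) (r + i)

section Aux
open Polynomial
variable {R : Type*} [CommRing R]

lemma msym_neg (S : Multiset R) {j : ℤ} (h : j < 0) : msym S j = 0 := if_neg (not_le.2 h)

lemma msym_nonneg (S : Multiset R) {j : ℤ} (h : 0 ≤ j) : msym S j = S.esymm j.toNat :=
  if_pos h

lemma msym_natCast (S : Multiset R) (j : ℕ) : msym S (j : ℤ) = S.esymm j := by
  rw [msym_nonneg S (Int.natCast_nonneg j), Int.toNat_natCast]

lemma msym_gt (S : Multiset R) {j : ℤ} (h : (Multiset.card S : ℤ) < j) : msym S j = 0 := by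
  rw [msym_nonneg S (le_of_lt ((Int.natCast_nonneg _).trans_lt h)), Multiset.esymm,
    Multiset.powersetCard_eq_empty _ (by omega)]
  simp

lemma esymm_cons_succ (a : R) (S : Multiset R) (j : ℕ) :
    (a ::ₘ S).esymm (j + 1) = S.esymm (j + 1) + a * S.esymm j := by
  rw [Multiset.esymm, Multiset.powersetCard_cons, Multiset.map_add, Multiset.sum_add,
    Multiset.map_map]
  congr 1
  rw [Multiset.esymm, ← Multiset.sum_map_mul_left]
  exact congrArg Multiset.sum (Multiset.map_congr rfl fun x _ => by
    simp [Multiset.prod_cons])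

lemma coeff_prod_C_mul_X_add_one (S : Multiset R) (j : ℕ) :
    ((S.map fun a => C a * X + 1).prod).coeff j = S.esymm j := by
  induction S using Multiset.induction generalizing j with
  | empty =>
    cases j with
    | zero => simp [Multiset.esymm]
    | succ j => simp [Multiset.esymm, Multiset.powersetCard_zero_right, coeff_one]
  | cons a S ih =>
    rw [Multiset.map_cons, Multiset.prod_cons, add_mul, one_mul, mul_assoc]
    cases j with
    | zero =>
      simp only [coeff_add, mul_coeff_zero, coeff_C, coeff_X_zero, ih, mul_zero, zero_mul,
        zero_add, if_pos rfl]
      simp [Multiset.esymm]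
    | succ j =>
      rw [coeff_add, coeff_C_mul, coeff_X_mul, ih, ih, esymm_cons_succ, add_comm]

lemma prod_inv_mul_C_prod (v : Multiset Rˣ) :
    ((v.map fun a => X + C ((a⁻¹ : Rˣ) : R)).prod) * C ((v.map Units.val).prod)
      = ((v.map Units.val).map fun a => C a * X + 1).prod := by
  induction v using Multiset.induction with
  | empty => simp
  | cons a v ih =>
    simp only [Multiset.map_cons, Multiset.prod_cons, map_mul]
    rw [← ih]
    have h : (X + C ((a⁻¹ : Rˣ) : R)) * C (a : R) = C (a : R) * X + 1 := by
      rw [add_mul, ← C_mul, Units.inv_mul, C_1, mul_comm X]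
    rw [← h]; ring

lemma coeff_prod_X_add_C (m : Multiset R) (a : ℕ) :
    ((m.map fun x => X + C x).prod).coeff a = msym m ((Multiset.card m : ℤ) - a) := by
  rcases le_or_gt a (Multiset.card m) with h | h
  · rw [Multiset.prod_X_add_C_coeff m h, msym_nonneg _ (by omega)]
    congr 1
    omega
  · rw [msym_neg _ (by omega), coeff_eq_zero_of_natDegree_lt]
    calc ((m.map fun x => X + C x).prod).natDegree
        ≤ ((m.map fun x => X + C x).map natDegree).sum := natDegree_multiset_prod_le _
      _ ≤ Multiset.card m := by
          rw [Multiset.map_map]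
          refine le_trans (Multiset.sum_le_card_nsmul _ 1 ?_) (by simp)
          intro x hx
          simp only [Multiset.mem_map] at hx
          obtain ⟨y, _, rfl⟩ := hx
          exact (natDegree_add_le _ _).trans (by simp [natDegree_X_le])
      _ < a := h

end Aux

section Aux2
open Polynomial
variable {R : Type*} [CommRing R]

lemma prod_mul_coeff_inv (v : Multiset Rˣ) (b : ℕ) :
    (v.map Units.val).prod *
      ((v.map fun a => X + C ((a⁻¹ : Rˣ) : R)).prod).coeff b
      = msym (v.map Units.val) (b : ℤ) := by
  rw [msym_natCast, ← coeff_prod_C_mul_X_add_one, ← prod_inv_mul_C_prod, mul_comm _ (C _),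
    coeff_C_mul]

lemma conv_lemma (v : Multiset Rˣ) (j : ℕ) :
    (v.map Units.val).prod *
      ((((v.map Units.val)).map fun x => X + C x).prod *
        (v.map fun a => X + C ((a⁻¹ : Rˣ) : R)).prod).coeff j
    = ∑ i ∈ Finset.range (Multiset.card v + 1),
        msym (v.map Units.val) (i : ℤ)
          * msym (v.map Units.val) ((j : ℤ) - (Multiset.card v : ℤ) + i) := by
  set m := v.map Units.val with hm
  set n := Multiset.card v with hn
  have hcm : Multiset.card m = n := by rw [hm, Multiset.card_map]
  set F : ℕ → R := fun a => msym m ((n : ℤ) - a) * msym m ((j : ℤ) - a) with hF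
  rw [coeff_mul, Finset.mul_sum, Finset.Nat.sum_antidiagonal_eq_sum_range_succ_mk]
  have step1 : ∀ a ∈ Finset.range (j + 1),
      m.prod * (((m.map fun x => X + C x).prod).coeff a *
        ((v.map fun a => X + C ((a⁻¹ : Rˣ) : R)).prod).coeff (j - a)) = F a := by
    intro a ha
    rw [Finset.mem_range] at ha
    rw [mul_left_comm, prod_mul_coeff_inv, coeff_prod_X_add_C, hcm, hF]
    have : ((j - a : ℕ) : ℤ) = (j : ℤ) - a := by omega
    rw [this]
  rw [Finset.sum_congr rfl step1]
  have step3 : ∑ i ∈ Finset.range (n + 1),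
      msym m (i : ℤ) * msym m ((j : ℤ) - (n : ℤ) + i) = ∑ a ∈ Finset.range (n + 1), F a := by
    rw [← Finset.sum_range_reflect F (n + 1)]
    refine Finset.sum_congr rfl fun i hi => ?_
    rw [Finset.mem_range] at hi
    simp only [hF]
    have h1 : ((n + 1 - 1 - i : ℕ) : ℤ) = (n : ℤ) - i := by omega
    rw [h1]
    congr 2
    · omega
    · omega
  rw [step3]
  set M := max j n with hM
  have e1 : ∑ a ∈ Finset.range (j + 1), F a = ∑ a ∈ Finset.range (M + 1), F a := by
    refine Finset.sum_subset (Finset.range_subset_range.2 (by omega)) fun a ha hna => ?_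
    rw [Finset.mem_range] at ha; rw [Finset.mem_range] at hna
    have : (j : ℤ) - a < 0 := by omega
    rw [hF]
    simp only
    rw [msym_neg _ this, mul_zero]
  have e2 : ∑ a ∈ Finset.range (n + 1), F a = ∑ a ∈ Finset.range (M + 1), F a := by
    refine Finset.sum_subset (Finset.range_subset_range.2 (by omega)) fun a ha hna => ?_
    rw [Finset.mem_range] at ha; rw [Finset.mem_range] at hna
    have : (n : ℤ) - a < 0 := by omega
    rw [hF]
    simp only
    rw [msym_neg _ this, zero_mul]
  rw [e1, e2]

end Aux2

section Main
open Polynomial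

lemma card_uMS {R : Type*} [CommRing R] {n : ℕ} (u : Fin n → Rˣ) :
    Multiset.card (uMS u) = n := by
  simp [uMS]

lemma uE_eq_zero {R : Type*} [CommRing R] {n : ℕ} (u : Fin n → Rˣ) {r : ℤ}
    (h : r < -(n : ℤ) ∨ (n : ℤ) < r) : uE u r = 0 := by
  refine Finset.sum_eq_zero fun i hi => ?_
  rw [Finset.mem_range] at hi
  have hi' : (i : ℤ) ≤ n := by omega
  rcases h with h | h
  · rw [msym_neg (uMS u) (show r + (i : ℤ) < 0 by omega), mul_zero]
  · rw [msym_gt (uMS u) (show (Multiset.card (uMS u) : ℤ) < r + i by rw [card_uMS]; omega),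
      mul_zero]

/-- For every integer `r`, `(u_1⋯u_n) · e_{n−r}(M') = E_r(u) + E_{r+1}(u)`, where `M'` is the
multiset `{u_1,…,u_n, u_1^{-1},…,u_n^{-1}, 1}` (with the extra element `1` adjoined). -/
theorem prod_mul_msym_one (R : Type*) [CommRing R] (n : ℕ) (u : Fin n → Rˣ) (r : ℤ) :
    (∏ i, (u i : R)) * msym (uMS u + uMSinv u + {(1 : R)}) ((n : ℤ) - r) =
      uE u r + uE u (r + 1) := by
  set v : Multiset Rˣ := Finset.univ.val.map u with hv
  have hvc : Multiset.card v = n := by simp [hv]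
  have hm : uMS u = v.map Units.val := by
    rw [hv, Multiset.map_map]; rfl
  have hminv : uMSinv u = v.map (fun a => ((a⁻¹ : Rˣ) : R)) := by
    rw [hv, Multiset.map_map]; rfl
  have hprod : (∏ i, (u i : R)) = (v.map Units.val).prod := by
    rw [hv, Multiset.map_map]; rfl
  have hcardM : Multiset.card (uMS u + uMSinv u + {(1 : R)}) = 2 * n + 1 := by
    simp [hm, hminv, hvc, two_mul]
  rcases le_or_gt r (n : ℤ) with hr1 | hr1
  · rcases le_or_gt (-(n : ℤ) - 1) r with hr2 | hr2
    · -- main case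
      obtain ⟨k, hk⟩ : ∃ k : ℕ, (k : ℤ) = (n : ℤ) + 1 + r :=
        ⟨((n : ℤ) + 1 + r).toNat, by omega⟩
      have hkle : k ≤ 2 * n + 1 := by omega
      -- coefficient formulation
      have hco : msym (uMS u + uMSinv u + {(1 : R)}) ((n : ℤ) - r)
          = (((uMS u + uMSinv u + {(1 : R)}).map fun x => X + C x).prod).coeff k := by
        rw [Multiset.prod_X_add_C_coeff _ (by rw [hcardM]; exact hkle),
          msym_nonneg _ (by omega), hcardM]
        congr 1
        omega
      rw [hco]
      have hsplit : ((uMS u + uMSinv u + {(1 : R)}).map fun x => X + C x).prod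
          = ((v.map Units.val).map fun x => X + C x).prod *
              (v.map fun a => X + C ((a⁻¹ : Rˣ) : R)).prod * (X + C 1) := by
        rw [Multiset.map_add, Multiset.map_add, Multiset.prod_add, Multiset.prod_add,
          Multiset.map_singleton, Multiset.prod_singleton, hm, hminv]
        simp only [Multiset.map_map]
        rfl
      rw [hsplit]
      set p : R[X] := ((v.map Units.val).map fun x => X + C x).prod *
        (v.map fun a => X + C ((a⁻¹ : Rˣ) : R)).prod with hp
      have hconv : ∀ j : ℕ, (∏ i, (u i : R)) * p.coeff j = uE u ((j : ℤ) - n) := by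
        intro j
        rw [hprod, hp, conv_lemma, uE, hvc, hm]
      have hx : p * (X + C 1) = p * X + p := by rw [mul_add, C_1, mul_one]
      rw [hx, coeff_add, mul_add, hconv k]
      have hk2 : (k : ℤ) - n = r + 1 := by omega
      rw [hk2]
      congr 1
      cases k with
      | zero =>
        rw [coeff_mul_X_zero, mul_zero]
        have : r = -(n : ℤ) - 1 := by omega
        rw [this, uE_eq_zero u (Or.inl (by omega))]
      | succ k' =>
        rw [coeff_mul_X, hconv k']
        congr 1
        omega
    · -- r < -(n+1) : everything zero
      rw [msym_gt _ (by rw [hcardM]; push_cast; omega), mul_zero,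
        uE_eq_zero u (Or.inl (by omega)), uE_eq_zero u (Or.inl (by omega)), add_zero]
  · -- r > n
    rw [msym_neg _ (by omega), mul_zero,
      uE_eq_zero u (Or.inr (by omega)), uE_eq_zero u (Or.inr (by omega)), add_zero]

end Main
end

section
/- The sum over all even b ≥ 0 and even c ≥ 0 of ( ch SST_n(λ(0,b,c)) + ch SST_n(λ(0,b,c+1)) ) equals E_0 in ℤ[x_1,…,x_n]. (When a = 0 every tableau has residue 0, so no residue condition is imposed; all but finitely many summands vanish.) -/
open MvPolynomial

/-- A semistandard tableau of skew shape `λ(a,b,c) = (2^{b+c},1^a)/(1^b)` with entries in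
`{1,…,n}` (encoded as `Fin n`), given as a pair `T = (L, R)` of strictly increasing columns:
`L` of height `a+c` (occupying rows `b+1,…,a+b+c`) and `R` of height `b+c` (occupying rows
`1,…,b+c`), with the row condition `l_j ≤ r_{b+j}` for `1 ≤ j ≤ c` (here `0`-indexed). -/
def IsTab (n a b c : ℕ) (T : (Fin (a + c) → Fin n) × (Fin (b + c) → Fin n)) : Prop :=
  StrictMono T.1 ∧ StrictMono T.2 ∧
    ∀ (j : ℕ) (_ : j < c) (h2 : j < a + c) (h3 : b + j < b + c),
      T.1 ⟨j, h2⟩ ≤ T.2 ⟨b + j, h3⟩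

/-- The tableau obtained from `T` by sliding the right column `R` down by `k` positions
(`0 ≤ k ≤ min{a,b}`) is again semistandard, i.e. `l_j ≤ r_{b+j−k}` for all `1 ≤ j ≤ c+k`
(here `0`-indexed). -/
def Slides (n a b c : ℕ) (T : (Fin (a + c) → Fin n) × (Fin (b + c) → Fin n)) (k : ℕ) : Prop :=
  k ≤ a ∧ k ≤ b ∧
    ∀ (j : ℕ) (_ : j < c + k) (h2 : j < a + c) (h3 : b + j - k < b + c),
      T.1 ⟨j, h2⟩ ≤ T.2 ⟨b + j - k, h3⟩

/-- The residue `𝔯_T`: the maximal `k` such that sliding `R` down by `k` positions keeps the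
tableau semistandard (`k = 0` always qualifies for a semistandard tableau). -/
noncomputable def tabResidue (n a b c : ℕ)
    (T : (Fin (a + c) → Fin n) × (Fin (b + c) → Fin n)) : ℕ :=
  sSup {k | Slides n a b c T k}

/-- The weight monomial `x^T = (∏_j x_{l_j}) · (∏_i x_{r_i})` of a tableau `T`. -/
noncomputable def tabWt (n a b c : ℕ) (T : (Fin (a + c) → Fin n) × (Fin (b + c) → Fin n)) :
    MvPolynomial (Fin n) ℤ :=
  (∏ j, X (T.1 j)) * (∏ i, X (T.2 i))

/-- The weight generating function `ch X = Σ_{T ∈ X} x^T` of a (finite) set of tableaux. -/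
noncomputable def tabCh (n a b c : ℕ)
    (Xs : Set ((Fin (a + c) → Fin n) × (Fin (b + c) → Fin n))) : MvPolynomial (Fin n) ℤ :=
  ∑ᶠ T ∈ Xs, tabWt n a b c T

/-- The `j`-th elementary symmetric polynomial in `x_1, …, x_n` over `ℤ`, indexed by `j : ℤ`,
with the conventions `e_0 = 1` and `e_j = 0` for `j < 0` or `j > n`. -/
noncomputable def eZ (n : ℕ) (j : ℤ) : MvPolynomial (Fin n) ℤ :=
  if 0 ≤ j then esymm (Fin n) ℤ j.toNat else 0

/-- `E_r = Σ_{i=0}^{n} e_i · e_{r+i}` for `r : ℤ`. -/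
noncomputable def EZ (n : ℕ) (r : ℤ) : MvPolynomial (Fin n) ℤ :=
  ∑ i ∈ Finset.range (n + 1), eZ n i * eZ n (r + i)

/-!
For `a = 0` a tableau is a pair of sets `(A, B)` of entries with `|A| = c`, `|B| = b + c`, and the
row condition says that, reading the entries in increasing order, `B` never gets more than `b`
entries ahead of `A`. Swapping the parts of `A` and `B` above the first point where `B` is `b + 1`
ahead (the Lindström–Gessel–Viennot involution) matches the violating pairs weight-preservingly
with all pairs of sizes `(c - 1, b + c + 1)`, which gives the Jacobi–Trudi formula
`ch SST_n(λ(0,b,c)) = e_c e_{b+c} - e_{c-1} e_{b+c+1}`. Summing over all `c` telescopes to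
`E_b - E_{b+2}`, and summing these over even `b` telescopes to `E_0`.
-/

section EvenSums

open Finset

variable {M : Type*} [AddCommMonoid M]

lemma finsum_mem_even (f : ℕ → M) : ∑ᶠ (c : ℕ) (_ : Even c), f c = ∑ᶠ k : ℕ, f (2 * k) := by
  have h : {c : ℕ | Even c} = Set.range (2 * ·) := by
    ext c
    simp only [Set.mem_ofPred_eq, Set.mem_range, even_iff_two_dvd, dvd_def, eq_comm]
  change ∑ᶠ c ∈ {c : ℕ | Even c}, f c = _
  rw [h, finsum_mem_range (mul_right_injective₀ two_ne_zero)]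

lemma Finset.sum_range_two_mul (f : ℕ → M) (N : ℕ) :
    ∑ c ∈ range (2 * N), f c = ∑ k ∈ range N, (f (2 * k) + f (2 * k + 1)) := by
  induction N with
  | zero => simp
  | succ N ih => rw [mul_add, mul_one, sum_range_succ, sum_range_succ, sum_range_succ, ih, add_assoc]

lemma finsum_mem_even_add_succ (f : ℕ → M) (N : ℕ) (hf : ∀ c, N ≤ c → f c = 0) :
    ∑ᶠ (c : ℕ) (_ : Even c), (f c + f (c + 1)) = ∑ c ∈ range N, f c := by
  rw [finsum_mem_even, finsum_eq_sum_of_support_subset (s := range N), ← sum_range_two_mul]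
  · exact (sum_subset (range_subset_range.2 (by omega)) fun c _ hc =>
      hf c (by simpa using hc)).symm
  · intro k hk
    by_contra hkN
    simp only [coe_range, Set.mem_Iio, not_lt] at hkN
    exact hk (by simp only [hf (2 * k) (by omega), hf (2 * k + 1) (by omega), add_zero])

lemma finsum_mem_even_sub_add_two {G : Type*} [AddCommGroup G] (u : ℕ → G) (N : ℕ)
    (hu : ∀ b, N ≤ b → u b = 0) : ∑ᶠ (b : ℕ) (_ : Even b), (u b - u (b + 2)) = u 0 := by
  rw [finsum_mem_even, finsum_eq_sum_of_support_subset (s := range N)]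
  · simpa [mul_add, hu (2 * N) (by omega)] using sum_range_sub' (fun k => u (2 * k)) N
  · intro k hk
    by_contra hkN
    simp only [coe_range, Set.mem_Iio, not_lt] at hkN
    exact hk (by simp only [hu (2 * k) (by omega), hu (2 * k + 2) (by omega), sub_zero])

end EvenSums

lemma MvPolynomial.esymm_eq_zero_of_card_lt {σ R : Type*} [Fintype σ] [CommSemiring R] {k : ℕ}
    (h : Fintype.card σ < k) : esymm σ R k = 0 := by
  rw [esymm, Finset.powersetCard_eq_empty.2 (by rwa [Finset.card_univ]), Finset.sum_empty]

namespace TwoColumn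

open Finset

section PairSums

variable {σ : Type*} [Fintype σ] (R : Type*) [CommRing R]

def pairs (p q : ℕ) : Finset (Finset σ × Finset σ) := powersetCard p univ ×ˢ powersetCard q univ

noncomputable def pairWeight (x : Finset σ × Finset σ) : MvPolynomial σ R :=
  (∏ i ∈ x.1, X i) * ∏ i ∈ x.2, X i

@[simp]
lemma mem_pairs {p q : ℕ} {x : Finset σ × Finset σ} : x ∈ pairs p q ↔ #x.1 = p ∧ #x.2 = q := by
  simp [pairs, mem_powersetCard]

lemma sum_pairWeight_pairs (p q : ℕ) :
    ∑ x ∈ pairs p q, pairWeight R x = esymm σ R p * esymm σ R q := by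
  rw [pairs, sum_product, esymm, esymm, sum_mul_sum]
  rfl

end PairSums

variable {n : ℕ}

section Counting

def countBelow (S : Finset (Fin n)) (s : ℕ) : ℕ := #(S.filter fun x : Fin n => (x : ℕ) < s)

variable (S : Finset (Fin n))

@[simp]
lemma countBelow_zero : countBelow S 0 = 0 := by simp [countBelow]

lemma countBelow_mono : Monotone (countBelow S) := fun _ _ hst =>
  card_le_card (monotone_filter_right S fun _ _ hx => lt_of_lt_of_le hx hst)

lemma countBelow_le_card (s : ℕ) : countBelow S s ≤ #S := card_le_card (filter_subset _ _)

lemma countBelow_of_le {s : ℕ} (h : n ≤ s) : countBelow S s = #S := by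
  rw [countBelow, filter_true_of_mem fun x _ => lt_of_lt_of_le x.isLt h]

lemma countBelow_succ_le (s : ℕ) : countBelow S (s + 1) ≤ countBelow S s + 1 :=
  calc countBelow S (s + 1)
        ≤ #(S.filter (fun x : Fin n => (x : ℕ) < s) ∪ S.filter (fun x : Fin n => (x : ℕ) = s)) :=
        card_le_card fun x hx => by
          simp only [mem_filter, mem_union] at hx ⊢
          exact (Nat.lt_succ_iff_lt_or_eq.1 hx.2).imp (⟨hx.1, ·⟩) (⟨hx.1, ·⟩)
    _ ≤ countBelow S s + #(S.filter fun x : Fin n => (x : ℕ) = s) := card_union_le _ _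
    _ ≤ countBelow S s + 1 := by
        gcongr
        exact card_le_one.2 fun a ha b hb => Fin.ext <| by simp only [mem_filter] at ha hb; omega

lemma lt_countBelow_image_iff {k : ℕ} {f : Fin k → Fin n} (hf : StrictMono f) (j : Fin k)
    (s : ℕ) : (j : ℕ) < countBelow (univ.image f) s ↔ (f j : ℕ) < s := by
  have hcount : countBelow (univ.image f) s = #(univ.filter fun i : Fin k => (f i : ℕ) < s) := by
    rw [countBelow, filter_image, card_image_of_injective _ hf.injective]
  rw [hcount]
  constructor
  · intro hj
    by_contra hfj
    have : univ.filter (fun i : Fin k => (f i : ℕ) < s) ⊆ Iio j := fun i hi => by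
      simp only [mem_filter, mem_univ, true_and, mem_Iio] at hi ⊢
      exact hf.lt_iff_lt.1 (by omega)
    have := card_le_card this
    rw [Fin.card_Iio] at this
    omega
  · intro hfj
    have : Iic j ⊆ univ.filter (fun i : Fin k => (f i : ℕ) < s) := fun i hi => by
      simp only [mem_filter, mem_univ, true_and, mem_Iic] at hi ⊢
      exact lt_of_le_of_lt (hf.monotone hi) hfj
    have := card_le_card this
    rw [Fin.card_Iic] at this
    omega

end Counting

def Fits (b : ℕ) (A B : Finset (Fin n)) : Prop := ∀ s, countBelow B s ≤ b + countBelow A s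

def Touches (b : ℕ) (A B : Finset (Fin n)) (s : ℕ) : Prop :=
  countBelow B s = b + 1 + countBelow A s

lemma fits_of_card_le {b : ℕ} {A B : Finset (Fin n)} (h : #B ≤ b) : Fits b A B :=
  fun s => (countBelow_le_card B s).trans (h.trans (Nat.le_add_right _ _))

lemma not_fits_iff_exists_touches {b : ℕ} {A B : Finset (Fin n)} :
    ¬ Fits b A B ↔ ∃ s, Touches b A B s := by
  constructor
  · intro h
    obtain ⟨s, hs⟩ : ∃ s, b + countBelow A s < countBelow B s := by
      simpa [Fits] using h
    induction s with
    | zero => simp at hs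
    | succ s ih =>
      by_cases hs' : b + countBelow A s < countBelow B s
      · exact ih hs'
      · have := countBelow_succ_le B s
        have := countBelow_mono A (Nat.le_add_right s 1)
        exact ⟨s + 1, by unfold Touches; omega⟩
  · rintro ⟨s, hs⟩ hfits
    have := hfits s
    unfold Touches at hs
    omega

lemma not_fits_of_card {b : ℕ} {A B : Finset (Fin n)} (h : b + #A < #B) : ¬ Fits b A B :=
  fun hfits => by
    have := hfits n
    rw [countBelow_of_le A le_rfl, countBelow_of_le B le_rfl] at this
    omega

section Splice

def splice (t : ℕ) (A B : Finset (Fin n)) : Finset (Fin n) :=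
  A.filter (fun x : Fin n => (x : ℕ) < t) ∪ B.filter (fun x : Fin n => ¬ (x : ℕ) < t)

variable (t : ℕ) (A B : Finset (Fin n))

lemma disjoint_filter_lt_filter_not_lt :
    Disjoint (A.filter fun x : Fin n => (x : ℕ) < t) (B.filter fun x : Fin n => ¬ (x : ℕ) < t) :=
  disjoint_left.2 fun _ hx hx' => (mem_filter.1 hx').2 (mem_filter.1 hx).2

lemma splice_splice : splice t (splice t A B) (splice t B A) = A := by
  ext x
  by_cases hx : (x : ℕ) < t
  · simp [splice, hx, not_le.2 hx]
  · simp [splice, hx, le_of_not_gt hx]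

lemma countBelow_eq_countBelow_min_add (S : Finset (Fin n)) (u : ℕ) :
    countBelow S u = countBelow S (min u t) +
      #((S.filter fun x : Fin n => (x : ℕ) < u).filter fun x : Fin n => ¬ (x : ℕ) < t) := by
  rw [countBelow, countBelow, ← card_filter_add_card_filter_not (fun x : Fin n => (x : ℕ) < t),
    filter_filter]
  simp only [lt_min_iff]

lemma countBelow_splice (u : ℕ) :
    countBelow (splice t A B) u + countBelow B (min u t) =
      countBelow A (min u t) + countBelow B u := by
  have hlow : countBelow (splice t A B) (min u t) = countBelow A (min u t) := by
    unfold countBelow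
    congr 1
    ext x
    by_cases hx : (x : ℕ) < t
    · simp [splice, hx, not_le.2 hx]
    · simp [hx]
  have hhigh : (((splice t A B).filter fun x : Fin n => (x : ℕ) < u).filter
      fun x : Fin n => ¬ (x : ℕ) < t) =
      ((B.filter fun x : Fin n => (x : ℕ) < u).filter fun x : Fin n => ¬ (x : ℕ) < t) := by
    ext x
    by_cases hx : (x : ℕ) < t
    · simp [hx]
    · simp [splice, hx, le_of_not_gt hx]
  rw [countBelow_eq_countBelow_min_add t (splice t A B) u, countBelow_eq_countBelow_min_add t B u,
    hlow, hhigh]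
  ring

lemma card_splice : #(splice t A B) + countBelow B t = countBelow A t + #B := by
  have := countBelow_splice t A B (n + t)
  rwa [min_eq_right (Nat.le_add_left t n), countBelow_of_le _ (Nat.le_add_right n t),
    countBelow_of_le _ (Nat.le_add_right n t)] at this

lemma prod_splice_mul_prod_splice {M : Type*} [CommMonoid M] (f : Fin n → M) :
    (∏ x ∈ splice t A B, f x) * ∏ x ∈ splice t B A, f x = (∏ x ∈ A, f x) * ∏ x ∈ B, f x := by
  rw [splice, splice, prod_union (disjoint_filter_lt_filter_not_lt t A B),
    prod_union (disjoint_filter_lt_filter_not_lt t B A), mul_mul_mul_comm,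
    mul_comm (∏ x ∈ B.filter _, f x), mul_mul_mul_comm, prod_filter_mul_prod_filter_not,
    prod_filter_mul_prod_filter_not]

end Splice

section TailSwap

/-- The Lindström–Gessel–Viennot involution: exchange the entries of `A` and `B` from the first
touching point on. Touching points, hence the first one, are preserved, so it is an involution on
the pairs that do not fit. -/
noncomputable def firstTouch (b : ℕ) (A B : Finset (Fin n)) : ℕ := sInf {s | Touches b A B s}

noncomputable def tailSwap (b : ℕ) (x : Finset (Fin n) × Finset (Fin n)) :
    Finset (Fin n) × Finset (Fin n) :=
  (splice (firstTouch b x.1 x.2) x.1 x.2, splice (firstTouch b x.1 x.2) x.2 x.1)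

variable {b t : ℕ} {A B : Finset (Fin n)}

lemma touches_splice_iff (ht : Touches b A B t) (u : ℕ) :
    Touches b (splice t A B) (splice t B A) u ↔ Touches b A B u := by
  have hA := countBelow_splice t A B u
  have hB := countBelow_splice t B A u
  unfold Touches at *
  rcases le_total u t with h | h
  · rw [min_eq_left h] at hA hB
    omega
  · rw [min_eq_right h] at hA hB
    omega

variable {x : Finset (Fin n) × Finset (Fin n)}

lemma touches_firstTouch (h : ¬ Fits b A B) : Touches b A B (firstTouch b A B) :=
  Nat.sInf_mem (not_fits_iff_exists_touches.1 h)

lemma firstTouch_tailSwap (h : ¬ Fits b x.1 x.2) :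
    firstTouch b (tailSwap b x).1 (tailSwap b x).2 = firstTouch b x.1 x.2 :=
  congrArg sInf (Set.ext fun u => touches_splice_iff (touches_firstTouch h) u)

lemma tailSwap_tailSwap (h : ¬ Fits b x.1 x.2) : tailSwap b (tailSwap b x) = x := by
  rw [tailSwap, firstTouch_tailSwap h]
  exact Prod.ext (splice_splice _ _ _) (splice_splice _ _ _)

lemma not_fits_tailSwap (h : ¬ Fits b x.1 x.2) : ¬ Fits b (tailSwap b x).1 (tailSwap b x).2 :=
  not_fits_iff_exists_touches.2
    ⟨_, (touches_splice_iff (touches_firstTouch h) _).2 (touches_firstTouch h)⟩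

lemma card_tailSwap (h : ¬ Fits b x.1 x.2) :
    #(tailSwap b x).1 + b + 1 = #x.2 ∧ #(tailSwap b x).2 = #x.1 + b + 1 := by
  have ht := touches_firstTouch h
  have h1 := card_splice (firstTouch b x.1 x.2) x.1 x.2
  have h2 := card_splice (firstTouch b x.1 x.2) x.2 x.1
  unfold Touches at ht
  exact ⟨by simp only [tailSwap]; omega, by simp only [tailSwap]; omega⟩

end TailSwap

section JacobiTrudi

variable (R : Type*) [CommRing R]

open scoped Classical in
lemma sum_pairWeight_not_fits {b p q : ℕ} (hqp : q ≤ p) :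
    ∑ x ∈ pairs p (b + 1 + q) with ¬ Fits b x.1 x.2, pairWeight R x =
      esymm (Fin n) R q * esymm (Fin n) R (b + 1 + p) := by
  have not_fits {y : Finset (Fin n) × Finset (Fin n)} (hy : y ∈ pairs q (b + 1 + p)) :
      ¬ Fits b y.1 y.2 :=
    not_fits_of_card (by rw [mem_pairs] at hy; omega)
  rw [← sum_pairWeight_pairs]
  refine sum_nbij' (tailSwap b) (tailSwap b) (fun x hx => ?_) (fun y hy => ?_)
    (fun x hx => tailSwap_tailSwap (mem_filter.1 hx).2)
    (fun y hy => tailSwap_tailSwap (not_fits hy))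
    (fun x _ => (prod_splice_mul_prod_splice _ _ _ _).symm)
  · rw [mem_filter, mem_pairs] at hx
    have := card_tailSwap hx.2
    rw [mem_pairs]
    omega
  · have hy' := not_fits hy
    have := card_tailSwap hy'
    rw [mem_pairs] at hy
    rw [mem_filter, mem_pairs]
    exact ⟨⟨by omega, by omega⟩, not_fits_tailSwap hy'⟩

open scoped Classical in
lemma sum_pairWeight_fits {b p q : ℕ} (hqp : q ≤ p) :
    ∑ x ∈ pairs p (b + 1 + q) with Fits b x.1 x.2, pairWeight R x =
      esymm (Fin n) R p * esymm (Fin n) R (b + 1 + q) -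
        esymm (Fin n) R q * esymm (Fin n) R (b + 1 + p) := by
  rw [← sum_pairWeight_not_fits R hqp, ← sum_pairWeight_pairs]
  exact eq_sub_of_add_eq (sum_filter_add_sum_filter_not _ _ _)

end JacobiTrudi

section Tableaux

variable {b m : ℕ}

lemma isTab_zero_iff {T : (Fin (0 + m) → Fin n) × (Fin (b + m) → Fin n)} :
    IsTab n 0 b m T ↔
      StrictMono T.1 ∧ StrictMono T.2 ∧ Fits b (univ.image T.1) (univ.image T.2) := by
  refine and_congr_right fun hL => and_congr_right fun hR => ⟨fun hrow s => ?_, fun hfits => ?_⟩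
  · by_contra! hlt
    set j := countBelow (univ.image T.1) s
    have hj : j < m := by
      have := countBelow_le_card (univ.image T.2) s
      rw [card_image_of_injective _ hR.injective, card_univ, Fintype.card_fin] at this
      omega
    have hLj : ¬ (T.1 ⟨j, by omega⟩ : ℕ) < s := by
      rw [← lt_countBelow_image_iff hL]
      exact lt_irrefl j
    have hRj : (T.2 ⟨b + j, by omega⟩ : ℕ) < s := by
      rw [← lt_countBelow_image_iff hR]
      exact hlt
    have := Fin.le_def.1 (hrow j hj (by omega) (by omega))
    omega
  · intro j hj h2 h3
    by_contra! hlt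
    have hB : b + j < countBelow (univ.image T.2) (T.1 ⟨j, h2⟩) :=
      (lt_countBelow_image_iff hR ⟨b + j, h3⟩ _).2 hlt
    have hA : ¬ j < countBelow (univ.image T.1) (T.1 ⟨j, h2⟩) :=
      (lt_countBelow_image_iff hL ⟨j, h2⟩ _).not.2 (lt_irrefl _)
    have := hfits (T.1 ⟨j, h2⟩)
    omega

open scoped Classical in
lemma tabCh_zero_eq_sum_fits :
    tabCh n 0 b m {T | IsTab n 0 b m T} =
      ∑ x ∈ pairs m (b + m) with Fits b x.1 x.2, pairWeight ℤ x := by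
  rw [tabCh, ← finsum_mem_coe_finset]
  refine finsum_mem_eq_of_bijOn (fun T => (univ.image T.1, univ.image T.2))
    ⟨fun T hT => ?_, fun T hT T' hT' hTT' => ?_, fun x hx => ?_⟩ fun T hT => ?_
  · obtain ⟨hL, hR, hfits⟩ := isTab_zero_iff.1 hT
    simp only [coe_filter, mem_pairs, Set.mem_ofPred_eq, card_image_of_injective _ hL.injective,
      card_image_of_injective _ hR.injective, card_univ, Fintype.card_fin]
    exact ⟨⟨zero_add m, trivial⟩, hfits⟩
  · obtain ⟨hL, hR, -⟩ := isTab_zero_iff.1 hT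
    obtain ⟨hL', hR', -⟩ := isTab_zero_iff.1 hT'
    simp only [Prod.mk.injEq, ← Finset.coe_inj, Fintype.coe_image_univ] at hTT'
    exact Prod.ext (hL.range_inj hL' |>.1 hTT'.1) (hR.range_inj hR' |>.1 hTT'.2)
  · simp only [coe_filter, mem_pairs, Set.mem_ofPred_eq] at hx
    obtain ⟨⟨h1, h2⟩, hfits⟩ := hx
    have h1' : #x.1 = 0 + m := by rw [h1, zero_add]
    refine ⟨(x.1.orderEmbOfFin h1', x.2.orderEmbOfFin h2), ?_, ?_⟩
    · refine isTab_zero_iff.2 ⟨(x.1.orderEmbOfFin h1').strictMono,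
        (x.2.orderEmbOfFin h2).strictMono, ?_⟩
      rwa [image_orderEmbOfFin_univ, image_orderEmbOfFin_univ]
    · simp only [image_orderEmbOfFin_univ]
  · obtain ⟨hL, hR, -⟩ := isTab_zero_iff.1 hT
    rw [tabWt, pairWeight, prod_image fun _ _ _ _ h => hL.injective h,
      prod_image fun _ _ _ _ h => hR.injective h]

end Tableaux

lemma eZ_of_eq_natCast {j : ℤ} {k : ℕ} (h : j = k) : eZ n j = esymm (Fin n) ℤ k := by
  simp [eZ, h]

lemma eZ_eq_zero_of_lt {j : ℤ} (h : n < j) : eZ n j = 0 := by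
  rw [eZ, if_pos (by omega), esymm_eq_zero_of_card_lt (by rw [Fintype.card_fin]; omega)]

lemma eZ_eq_zero_of_neg {j : ℤ} (h : j < 0) : eZ n j = 0 := if_neg (by omega)

lemma EZ_eq_zero_of_lt {r : ℤ} (h : n < r) : EZ n r = 0 :=
  sum_eq_zero fun i _ => by rw [eZ_eq_zero_of_lt (j := r + i) (by omega), mul_zero]

lemma tabCh_zero_eq (b c : ℕ) :
    tabCh n 0 b c {T | IsTab n 0 b c T} =
      eZ n c * eZ n (b + c) - eZ n (c - 1) * eZ n (b + c + 1) := by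
  classical
  rw [tabCh_zero_eq_sum_fits]
  cases c with
  | zero =>
    rw [Nat.add_zero, filter_true_of_mem fun x hx => fits_of_card_le (mem_pairs.1 hx).2.le,
      sum_pairWeight_pairs, eZ_of_eq_natCast rfl, eZ_of_eq_natCast (k := b) (by simp),
      eZ_eq_zero_of_neg (by omega), zero_mul, sub_zero]
  | succ c =>
    rw [show b + (c + 1) = b + 1 + c by ring, sum_pairWeight_fits ℤ (Nat.le_succ c),
      eZ_of_eq_natCast rfl, eZ_of_eq_natCast (k := b + 1 + c) (by push_cast; ring),
      eZ_of_eq_natCast (k := c) (by push_cast; ring),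
      eZ_of_eq_natCast (k := b + 1 + (c + 1)) (by push_cast; ring)]

lemma finsum_even_tabCh_add_tabCh_succ (b : ℕ) :
    (∑ᶠ (c : ℕ) (_ : Even c),
        (tabCh n 0 b c {T | IsTab n 0 b c T} +
          tabCh n 0 b (c + 1) {T | IsTab n 0 b (c + 1) T})) = EZ n b - EZ n (b + 2) := by
  rw [finsum_mem_even_add_succ (fun c => tabCh n 0 b c {T | IsTab n 0 b c T}) (n + 1)]
  · have shifted : ∑ c ∈ range (n + 1), eZ n (c - 1) * eZ n (b + c + 1) = EZ n (b + 2) := by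
      rw [EZ, sum_range_succ', sum_range_succ, eZ_eq_zero_of_lt (j := b + 2 + n) (by omega),
        eZ_eq_zero_of_neg (j := ((0 : ℕ) : ℤ) - 1) (by omega), mul_zero, zero_mul, add_zero,
        add_zero]
      refine sum_congr rfl fun c _ => ?_
      push_cast
      ring_nf
    rw [sum_congr rfl fun c _ => tabCh_zero_eq b c, sum_sub_distrib, shifted]
    rfl
  · intro c hc
    rw [tabCh_zero_eq, eZ_eq_zero_of_lt (j := c) (by omega),
      eZ_eq_zero_of_lt (j := b + c + 1) (by omega), zero_mul, mul_zero, sub_zero]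

end TwoColumn

theorem ch_d_infinity_zero_sum_general (n : ℕ) :
    (∑ᶠ (b : ℕ) (_ : Even b) (c : ℕ) (_ : Even c),
        (tabCh n 0 b c {T | IsTab n 0 b c T} +
          tabCh n 0 b (c + 1) {T | IsTab n 0 b (c + 1) T})) =
      EZ n 0 := by
  rw [finsum_congr fun b => finsum_congr fun _ => TwoColumn.finsum_even_tabCh_add_tabCh_succ b]
  simpa using finsum_mem_even_sub_add_two (fun b : ℕ => EZ n b) (n + 1)
    fun b hb => TwoColumn.EZ_eq_zero_of_lt (by omega)

/-- `Σ_{b,c≥0 even} ( ch SST_n(λ(0,b,c)) + ch SST_n(λ(0,b,c+1)) ) = E_0` in `ℤ[x_1,…,x_n]`.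
(When `a = 0` every tableau has residue `0`, so no residue condition is imposed; all but
finitely many summands vanish.) -/
theorem ch_d_infinity_zero_sum (n : ℕ) (hn : 1 ≤ n) :
    (∑ᶠ (b : ℕ) (_ : Even b) (c : ℕ) (_ : Even c),
        (tabCh n 0 b c {T | IsTab n 0 b c T} +
          tabCh n 0 b (c + 1) {T | IsTab n 0 b (c + 1) T})) =
      EZ n 0 :=
  ch_d_infinity_zero_sum_general n
end
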